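/- arXiv:2307.12592 — 6 statements merged into one kernel-verified Lean document; each statement's English description precedes it below -/
import Mathlib

section
/- Let c > 0, a > 0 and x ∈ ℝ. The function u ↦ a·H_c(u) + (1/2)(u − x)² has a unique minimizer over ℝ, equal to (1 − a / max(|x|/c, a+1)) · x. Equivalently, the proximal operator of a·H_c at x equals x/(a+1) when |x| ≤ c(a+1), and x − a·c·sgn(x) when |x| > c(a+1). -/
/-- The Huber function with threshold `c`. -/
noncomputable def huber (c x : ℝ) : ℝ :=
  if |x| ≤ c then x ^ 2 / 2 else c * (|x| - c / 2)

/-- Subgradient inequality for the Huber function with slope `clamp p`. -/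
lemma huber_subgrad (c : ℝ) (hc : 0 < c) (p u : ℝ) :
    huber c p + (max (-c) (min c p)) * (u - p) ≤ huber c u := by
  unfold huber
  rcases le_or_gt (|p|) c with hp | hp
  · have hp1 : -c ≤ p := (abs_le.mp hp).1
    have hp2 : p ≤ c := (abs_le.mp hp).2
    rw [if_pos hp, min_eq_right hp2, max_eq_right hp1]
    rcases le_or_gt (|u|) c with hu | hu
    · rw [if_pos hu]; nlinarith [sq_nonneg (u - p)]
    · rw [if_neg (not_le.mpr hu)]
      have h1 : p * u ≤ |p| * |u| := le_trans (le_abs_self _) (by rw [abs_mul])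
      nlinarith [h1, sq_nonneg (c - |p|), sq_abs p,
        mul_nonneg (by linarith : (0:ℝ) ≤ c - |p|) (by linarith : (0:ℝ) ≤ |u| - c)]
  · have hp' : ¬ |p| ≤ c := not_le.mpr hp
    rw [if_neg hp']
    rcases le_or_gt p 0 with h0 | h0
    · -- p < -c
      have hpc : p < -c := by
        rcases abs_cases p with ⟨h, _⟩ | ⟨h, _⟩ <;> linarith
      rw [min_eq_right (by linarith), max_eq_left (by linarith)]
      have habs : |p| = -p := abs_of_neg (by linarith)
      rcases le_or_gt (|u|) c with hu | hu
      · rw [if_pos hu]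
        have hu1 : -c ≤ u := (abs_le.mp hu).1
        nlinarith [sq_nonneg (u + c)]
      · rw [if_neg (not_le.mpr hu)]
        have : -u ≤ |u| := neg_le_abs u
        nlinarith
    · -- p > c
      have hpc : c < p := by
        rcases abs_cases p with ⟨h, _⟩ | ⟨h, _⟩ <;> linarith
      rw [min_eq_left (by linarith), max_eq_right (by linarith)]
      have habs : |p| = p := abs_of_pos (by linarith)
      rcases le_or_gt (|u|) c with hu | hu
      · rw [if_pos hu]
        have hu2 : u ≤ c := (abs_le.mp hu).2
        nlinarith [sq_nonneg (u - c)]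
      · rw [if_neg (not_le.mpr hu)]
        have : u ≤ |u| := le_abs_self u
        nlinarith

/-- For `c > 0`, `a > 0` and `x : ℝ`, the function `u ↦ a·H_c(u) + (1/2)(u − x)²` has a unique
minimizer over `ℝ`, equal to `(1 − a / max (|x|/c) (a+1)) · x`; equivalently, this proximal
point equals `x/(a+1)` when `|x| ≤ c(a+1)` and `x − a·c·sgn x` when `|x| > c(a+1)`. -/
theorem prox_huber (c a x : ℝ) (hc : 0 < c) (ha : 0 < a) :
    let f : ℝ → ℝ := fun u => a * huber c u + (1 / 2) * (u - x) ^ 2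
    let p : ℝ := (1 - a / max (|x| / c) (a + 1)) * x
    (∀ u, f p ≤ f u) ∧ (∀ u, (∀ w, f u ≤ f w) → u = p) ∧
      p = (if |x| ≤ c * (a + 1) then x / (a + 1) else x - a * c * Real.sign x) := by
  intro f p
  have ha1 : (0:ℝ) < a + 1 := by linarith
  -- establish the closed form of p and the stationarity condition
  have hmain : p = (if |x| ≤ c * (a + 1) then x / (a + 1) else x - a * c * Real.sign x) ∧
      a * (max (-c) (min c p)) + p - x = 0 := by
    rcases le_or_gt (|x|) (c * (a + 1)) with hx | hx
    · have hmax : max (|x| / c) (a + 1) = a + 1 := by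
        apply max_eq_right
        rw [div_le_iff₀ hc]; linarith
      have hpval : p = x / (a + 1) := by
        show (1 - a / max (|x| / c) (a + 1)) * x = x / (a + 1)
        rw [hmax]; field_simp; try ring
      have hpabs : |p| ≤ c := by
        rw [hpval, abs_div, abs_of_pos ha1, div_le_iff₀ ha1]; linarith
      have h1 : min c p = p := min_eq_right (abs_le.mp hpabs).2
      have h2 : max (-c) p = p := max_eq_right (abs_le.mp hpabs).1
      refine ⟨by rw [if_pos hx]; exact hpval, ?_⟩
      rw [h1, h2, hpval]; field_simp; try ring
    · have hxne : x ≠ 0 := by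
        intro h; rw [h, abs_zero] at hx; nlinarith
      have hmax : max (|x| / c) (a + 1) = |x| / c := by
        apply max_eq_left
        rw [le_div_iff₀ hc]; linarith
      rcases lt_or_gt_of_ne hxne with hneg | hpos
      · have habs : |x| = -x := abs_of_neg hneg
        have hsign : Real.sign x = -1 := Real.sign_of_neg hneg
        have hpval : p = x + a * c := by
          show (1 - a / max (|x| / c) (a + 1)) * x = x + a * c
          rw [hmax, habs]
          have hxne' : -x ≠ 0 := by simp [hxne]
          field_simp
          ring
        have hplt : p < -c := by
          have : x < -(c * (a + 1)) := by rw [habs] at hx; linarith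
          rw [hpval]; nlinarith
        refine ⟨by rw [if_neg (not_le.mpr hx), hsign]; rw [hpval]; ring, ?_⟩
        rw [min_eq_right (by linarith), max_eq_left (by linarith), hpval]; ring
      · have habs : |x| = x := abs_of_pos hpos
        have hsign : Real.sign x = 1 := Real.sign_of_pos hpos
        have hpval : p = x - a * c := by
          show (1 - a / max (|x| / c) (a + 1)) * x = x - a * c
          rw [hmax, habs]
          field_simp
          try ring
        have hpgt : c < p := by
          rw [habs] at hx; rw [hpval]; nlinarith
        refine ⟨by rw [if_neg (not_le.mpr hx), hsign]; rw [hpval]; ring, ?_⟩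
        rw [min_eq_left (by linarith), max_eq_right (by linarith), hpval]; ring
  obtain ⟨hform, hstat⟩ := hmain
  have key : ∀ u, f p + (u - p) ^ 2 / 2 ≤ f u := by
    intro u
    have h1 := huber_subgrad c hc p u
    have h2 : (a * (max (-c) (min c p)) + p - x) * (u - p) = 0 := by rw [hstat]; ring
    show a * huber c p + (1 / 2) * (p - x) ^ 2 + (u - p) ^ 2 / 2 ≤
      a * huber c u + (1 / 2) * (u - x) ^ 2
    nlinarith [mul_le_mul_of_nonneg_left h1 ha.le, h2]
  clear_value f p
  refine ⟨fun u => le_trans (by nlinarith [sq_nonneg (u - p)]) (key u), fun u hu => ?_, hform⟩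
  have h1 := key u
  have h2 := hu p
  have h3 : (u - p) ^ 2 ≤ 0 := by linarith
  have h4 : (u - p) ^ 2 = 0 := le_antisymm h3 (sq_nonneg _)
  have := pow_eq_zero_iff (n := 2) (by norm_num) |>.mp h4
  linarith [sub_eq_zero.mp this]
end

section
/- Let E be a real inner product space that is a complete normed space, let c > 0, a > 0 and X ∈ E. The function U ↦ a·H_c(‖U‖) + (1/2)‖U − X‖² has a unique minimizer over E, equal to (1 − a / max(‖X‖/c, a+1)) · X. (In particular, when X = 0 the minimizer is 0.) -/
noncomputable def huberProxFactor (c a s : ℝ) : ℝ :=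
  1 - a / max (s / c) (a + 1)

lemma huber_add_min_mul_sub_le {c r₀ : ℝ} (hc : 0 < c) (hr₀ : 0 ≤ r₀) (r : ℝ) :
    huber c r₀ + min r₀ c * (r - r₀) ≤ huber c r := by
  unfold huber
  rw [abs_of_nonneg hr₀]
  rcases le_or_gt r₀ c with h₀ | h₀
  · rw [if_pos h₀, min_eq_left h₀]
    split_ifs with h <;> cases abs_cases r <;> nlinarith [sq_nonneg (r - r₀)]
  · rw [if_neg (not_le.mpr h₀), min_eq_right h₀.le]
    split_ifs with h <;> cases abs_cases r <;> nlinarith [sq_nonneg (r - c), sq_nonneg (r + c)]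

section huberProxFactor

variable {c a s : ℝ}

lemma huberProxFactor_nonneg (ha : 0 ≤ a) : 0 ≤ huberProxFactor c a s := by
  have hM : a + 1 ≤ max (s / c) (a + 1) := le_max_right _ _
  rw [huberProxFactor, sub_nonneg, div_le_one (by linarith)]
  linarith

lemma huberProxFactor_le_one (ha : 0 ≤ a) : huberProxFactor c a s ≤ 1 := by
  have hM : a + 1 ≤ max (s / c) (a + 1) := le_max_right _ _
  rw [huberProxFactor, sub_le_self_iff]
  exact div_nonneg ha (by linarith)

lemma huberProxFactor_mul_add_mul_min (hc : 0 < c) (ha : 0 ≤ a) :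
    huberProxFactor c a s * s + a * min (huberProxFactor c a s * s) c = s := by
  unfold huberProxFactor
  rcases le_or_gt (s / c) (a + 1) with h | h
  · have hsc : s ≤ c * (a + 1) := by rwa [div_le_iff₀ hc, mul_comm] at h
    have hr₀ : (1 - a / (a + 1)) * s = s / (a + 1) := by field_simp; ring
    have hr₀c : s / (a + 1) ≤ c := by rwa [div_le_iff₀ (by linarith)]
    rw [max_eq_right h, hr₀, min_eq_left hr₀c]
    field_simp
    ring
  · have hsc : c * (a + 1) < s := by rwa [lt_div_iff₀ hc, mul_comm] at h
    have hr₀ : (1 - a / (s / c)) * s = s - a * c := by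
      field_simp [show s ≠ 0 by nlinarith]
    rw [max_eq_left h.le, hr₀, min_eq_right (by nlinarith)]
    ring

end huberProxFactor

section InnerProductSpace

variable {E : Type*} [NormedAddCommGroup E] [InnerProductSpace ℝ E]

lemma huber_norm_add_half_norm_sub_sq_le {c a t : ℝ} (hc : 0 < c) (ha : 0 ≤ a) (ht₀ : 0 ≤ t)
    (ht₁ : t ≤ 1) {X : E} (hprox : t * ‖X‖ + a * min (t * ‖X‖) c = ‖X‖) (U : E) :
    a * huber c ‖t • X‖ + 1 / 2 * ‖t • X - X‖ ^ 2 + 1 / 2 * ‖U - t • X‖ ^ 2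
      ≤ a * huber c ‖U‖ + 1 / 2 * ‖U - X‖ ^ 2 := by
  have hr₀ : 0 ≤ t * ‖X‖ := mul_nonneg ht₀ (norm_nonneg X)
  have hsubgrad := mul_le_mul_of_nonneg_left (huber_add_min_mul_sub_le hc hr₀ ‖U‖) ha
  rw [mul_add, ← mul_assoc, show a * min (t * ‖X‖) c = (1 - t) * ‖X‖ by linarith] at hsubgrad
  have hcs := mul_le_mul_of_nonneg_left (real_inner_le_norm U X) (sub_nonneg.mpr ht₁)
  have hPX : t • X - X = (t - 1) • X := by rw [sub_smul, one_smul]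
  rw [hPX, norm_smul_of_nonneg ht₀, norm_smul, Real.norm_of_nonpos (by linarith),
    norm_sub_sq_real, norm_sub_sq_real, inner_smul_right, norm_smul_of_nonneg ht₀]
  linarith

end InnerProductSpace

theorem prox_huber_comp_norm_general {E : Type*} [NormedAddCommGroup E] [InnerProductSpace ℝ E]
    (c a : ℝ) (hc : 0 < c) (ha : 0 < a) (X : E) :
    let f : E → ℝ := fun U => a * huber c ‖U‖ + (1 / 2) * ‖U - X‖ ^ 2
    let P : E := (1 - a / max (‖X‖ / c) (a + 1)) • X
    (∀ U, f P ≤ f U) ∧ (∀ U, (∀ W, f U ≤ f W) → U = P) := by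
  intro f P
  have hstrong (U : E) : f P + 1 / 2 * ‖U - P‖ ^ 2 ≤ f U :=
    huber_norm_add_half_norm_sub_sq_le hc ha.le (huberProxFactor_nonneg ha.le)
      (huberProxFactor_le_one ha.le) (huberProxFactor_mul_add_mul_min hc ha.le) U
  refine ⟨fun U => by linarith [hstrong U, sq_nonneg ‖U - P‖], fun U hU => ?_⟩
  have hsq : ‖U - P‖ ^ 2 ≤ 0 := by linarith [hstrong U, hU P]
  simpa [sub_eq_zero] using hsq

/-- Let `E` be a real inner product space that is a complete normed space, `c > 0`, `a > 0`,
`X ∈ E`. The function `U ↦ a·H_c(‖U‖) + (1/2)‖U − X‖²` has a unique minimizer over `E`,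
equal to `(1 − a / max (‖X‖/c) (a+1)) • X`. -/
theorem prox_huber_comp_norm {E : Type*} [NormedAddCommGroup E] [InnerProductSpace ℝ E]
    [CompleteSpace E] (c a : ℝ) (hc : 0 < c) (ha : 0 < a) (X : E) :
    let f : E → ℝ := fun U => a * huber c ‖U‖ + (1 / 2) * ‖U - X‖ ^ 2
    let P : E := (1 - a / max (‖X‖ / c) (a + 1)) • X
    (∀ U, f P ≤ f U) ∧ (∀ U, (∀ W, f U ≤ f W) → U = P) :=
  prox_huber_comp_norm_general c a hc ha X
end

section
/- Let E be a real inner product space that is a complete normed space, let c > 0, a > 0, and let y, m ∈ E. The function l ↦ a·H_c(‖y − l‖) + (1/2)‖m − l‖² has a unique minimizer over E, equal to y + (1 − a / max(‖m − y‖/c, a+1)) · (m − y). -/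
open scoped RealInnerProductSpace

lemma min_mul_sub_le_huber_sub {c u u0 : ℝ} (hu : 0 ≤ u) (hu0 : 0 ≤ u0) :
    min u0 c * (u - u0) ≤ huber c u - huber c u0 := by
  unfold huber
  rw [abs_of_nonneg hu, abs_of_nonneg hu0]
  rcases le_or_gt u c with h1 | h1 <;> rcases le_or_gt u0 c with h2 | h2
  · rw [if_pos h1, if_pos h2, min_eq_left h2]
    nlinarith [sq_nonneg (u - u0)]
  · rw [if_pos h1, if_neg (not_le.2 h2), min_eq_right h2.le]
    nlinarith [sq_nonneg (u - c)]
  · rw [if_neg (not_le.2 h1), if_pos h2, min_eq_left h2]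
    nlinarith [sq_nonneg (c - u0), mul_nonneg (sub_nonneg.2 h2) (le_of_lt (sub_pos.2 h1))]
  · rw [if_neg (not_le.2 h1), if_neg (not_le.2 h2), min_eq_right h2.le]
    nlinarith

lemma min_one_div_mul_self {c u : ℝ} (hc : 0 ≤ c) (hu : 0 ≤ u) : min 1 (c / u) * u = min u c := by
  rcases hu.eq_or_lt with rfl | hu
  · simp [hc]
  · rw [min_mul_of_nonneg _ _ hu.le, one_mul, div_mul_cancel₀ _ hu.ne']

lemma forall_le_and_unique_of_forall_ne_lt {α β : Type*} [LinearOrder β] (f : α → β) (p : α)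
    (h : ∀ l, l ≠ p → f p < f l) : (∀ l, f p ≤ f l) ∧ ∀ l, (∀ w, f l ≤ f w) → l = p := by
  refine ⟨fun l => ?_, fun l hl => ?_⟩
  · rcases eq_or_ne l p with rfl | hlp
    exacts [le_rfl, (h l hlp).le]
  · by_contra hlp
    exact (h l hlp).not_ge (hl p)

section InnerProductSpace

variable {E : Type*} [NormedAddCommGroup E] [InnerProductSpace ℝ E]

/-- The gradient of `x ↦ huber c ‖x‖`, i.e. the projection of `x` onto the closed ball of radius `c`
(at `x = 0` the junk value `c / 0 = 0` still gives `0`). -/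
noncomputable def huberGrad (c : ℝ) (x : E) : E := min 1 (c / ‖x‖) • x

/-- The proximal map of `x ↦ a * huber c ‖x‖`. -/
noncomputable def huberProx (a c : ℝ) (v : E) : E := (1 - a / max (‖v‖ / c) (a + 1)) • v

lemma inner_huberGrad_sub_le {c : ℝ} (hc : 0 ≤ c) (x0 x : E) :
    ⟪huberGrad c x0, x - x0⟫ ≤ huber c ‖x‖ - huber c ‖x0‖ := by
  set t := min 1 (c / ‖x0‖)
  have ht : 0 ≤ t := le_min zero_le_one (by positivity)
  calc ⟪huberGrad c x0, x - x0⟫ = t * (⟪x0, x⟫ - ‖x0‖ ^ 2) := by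
        rw [huberGrad, real_inner_smul_left, inner_sub_right, real_inner_self_eq_norm_sq]
    _ ≤ t * (‖x0‖ * ‖x‖ - ‖x0‖ ^ 2) := by gcongr; exact real_inner_le_norm x0 x
    _ = min ‖x0‖ c * (‖x‖ - ‖x0‖) := by rw [← min_one_div_mul_self hc (norm_nonneg x0)]; ring
    _ ≤ huber c ‖x‖ - huber c ‖x0‖ := min_mul_sub_le_huber_sub (norm_nonneg x) (norm_nonneg x0)

lemma huberProx_add_smul_huberGrad {a c : ℝ} (hc : 0 < c) (ha : 0 ≤ a) (v : E) :
    huberProx a c v + a • huberGrad c (huberProx a c v) = v := by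
  rcases eq_or_ne v 0 with rfl | hv
  · simp [huberProx, huberGrad]
  have hr : 0 < ‖v‖ := norm_pos_iff.2 hv
  rcases le_or_gt (‖v‖ / c) (a + 1) with h | h
  · have hs : 1 - a / max (‖v‖ / c) (a + 1) = (a + 1)⁻¹ := by
      rw [max_eq_right h]; field_simp; ring
    have hgrad : min 1 (c / ‖huberProx a c v‖) = 1 := by
      rw [huberProx, hs, norm_smul, norm_inv, Real.norm_of_nonneg (by linarith), min_eq_left]
      rw [one_le_div₀ (by positivity), inv_mul_le_iff₀ (by linarith)]
      exact (div_le_iff₀ hc).1 h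
    rw [huberGrad, hgrad, one_smul, huberProx, hs, smul_smul, ← add_smul]
    rw [show (a + 1)⁻¹ + a * (a + 1)⁻¹ = 1 by field_simp; ring, one_smul]
  · have hs : 1 - a / max (‖v‖ / c) (a + 1) = (‖v‖ - a * c) / ‖v‖ := by
      rw [max_eq_left h.le]; field_simp
    have hvac : c < ‖v‖ - a * c := by
      have := (lt_div_iff₀ hc).1 h; linarith
    have hgrad : min 1 (c / ‖huberProx a c v‖) = c / (‖v‖ - a * c) := by
      rw [huberProx, hs, norm_smul, Real.norm_of_nonneg (div_nonneg (by linarith) hr.le),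
        div_mul_cancel₀ _ hr.ne', min_eq_right ((div_le_one (by linarith)).2 (by linarith))]
    rw [huberGrad, hgrad, huberProx, hs, smul_smul, smul_smul, ← add_smul]
    convert one_smul ℝ v using 2
    have : ‖v‖ - a * c ≠ 0 := by linarith
    field_simp
    ring

lemma add_half_norm_sq_le_of_inner_le (g : E → ℝ) (m p : E)
    (h : ∀ l, ⟪m - p, l - p⟫ ≤ g l - g p) (l : E) :
    g p + 1 / 2 * ‖m - p‖ ^ 2 + 1 / 2 * ‖l - p‖ ^ 2 ≤ g l + 1 / 2 * ‖m - l‖ ^ 2 := by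
  have hexp : ‖m - l‖ ^ 2 = ‖m - p‖ ^ 2 - 2 * ⟪m - p, l - p⟫ + ‖l - p‖ ^ 2 := by
    rw [← norm_sub_sq_real, sub_sub_sub_cancel_right]
  linarith [h l]

end InnerProductSpace

theorem L_update_prox_general {E : Type*} [NormedAddCommGroup E] [InnerProductSpace ℝ E]
    (c a : ℝ) (hc : 0 < c) (ha : 0 < a) (y m : E) :
    let f : E → ℝ := fun l => a * huber c ‖y - l‖ + (1 / 2) * ‖m - l‖ ^ 2
    let p : E := y + (1 - a / max (‖m - y‖ / c) (a + 1)) • (m - y)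
    (∀ l, f p ≤ f l) ∧ (∀ l, (∀ w, f l ≤ f w) → l = p) := by
  intro f p
  have hmp : m - p = a • huberGrad c (p - y) := by
    have hfix := huberProx_add_smul_huberGrad hc ha.le (m - y)
    rw [show huberProx a c (m - y) = p - y from (add_sub_cancel_left y _).symm] at hfix
    rw [← sub_sub_sub_cancel_right m p y, ← hfix, add_sub_cancel_left]
  have hsub (l : E) : ⟪m - p, l - p⟫ ≤ a * huber c ‖y - l‖ - a * huber c ‖y - p‖ := by
    rw [hmp, real_inner_smul_left, norm_sub_rev y l, norm_sub_rev y p, ← mul_sub,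
      ← sub_sub_sub_cancel_right l p y]
    exact mul_le_mul_of_nonneg_left (inner_huberGrad_sub_le hc.le _ _) ha.le
  refine forall_le_and_unique_of_forall_ne_lt f p fun l hl => ?_
  have hsq := add_half_norm_sq_le_of_inner_le (fun l => a * huber c ‖y - l‖) m p hsub l
  have hpos : 0 < ‖l - p‖ ^ 2 := pow_pos (norm_pos_iff.2 (sub_ne_zero.2 hl)) 2
  have : 0 ≤ ‖m - p‖ ^ 2 := sq_nonneg _
  simp only [f]
  linarith

/-- Let `E` be a real inner product space that is a complete normed space, `c > 0`, `a > 0`,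
and `y m ∈ E`. The function `l ↦ a·H_c(‖y − l‖) + (1/2)‖m − l‖²` has a unique minimizer over
`E`, equal to `y + (1 − a / max (‖m − y‖/c) (a+1)) • (m − y)`. -/
theorem L_update_prox {E : Type*} [NormedAddCommGroup E] [InnerProductSpace ℝ E]
    [CompleteSpace E] (c a : ℝ) (hc : 0 < c) (ha : 0 < a) (y m : E) :
    let f : E → ℝ := fun l => a * huber c ‖y - l‖ + (1 / 2) * ‖m - l‖ ^ 2
    let p : E := y + (1 - a / max (‖m - y‖ / c) (a + 1)) • (m - y)
    (∀ l, f p ≤ f l) ∧ (∀ l, (∀ w, f l ≤ f w) → l = p) :=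
  L_update_prox_general c a hc ha y m
end

section
/- Let E be a real inner product space that is a complete normed space, let λ > 0 and a ∈ E. The function u ↦ λ‖u‖ + (1/2)‖u − a‖² has a unique minimizer over E, equal to max(1 − λ/‖a‖, 0) · a when a ≠ 0, and equal to 0 when a = 0. -/
/-!
The point `p = max (1 - λ/‖a‖) 0 • a` satisfies the optimality condition `a - p ∈ ∂(λ‖·‖)(p)`:
the residual `a - p` has norm at most `λ` and is aligned with `p`. For a `1`-strongly convex
objective `g + ½‖· - a‖²`, a subgradient condition at `p` yields the quadratic growth bound
`f p + ½‖u - p‖² ≤ f u`, which gives both minimality and uniqueness.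
-/

open RealInnerProductSpace

section

variable {E : Type*} [NormedAddCommGroup E] [InnerProductSpace ℝ E]

theorem add_half_norm_sub_sq_le_of_subgradient {g : E → ℝ} {a p : E}
    (hsub : ∀ u, g p + ⟪a - p, u - p⟫ ≤ g u) (u : E) :
    g p + 1 / 2 * ‖p - a‖ ^ 2 + 1 / 2 * ‖u - p‖ ^ 2 ≤ g u + 1 / 2 * ‖u - a‖ ^ 2 := by
  have hexpand : ‖u - a‖ ^ 2 = ‖u - p‖ ^ 2 + 2 * ⟪u - p, p - a⟫ + ‖p - a‖ ^ 2 := by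
    simpa only [sub_add_sub_cancel] using norm_add_sq_real (u - p) (p - a)
  have hflip : ⟪u - p, p - a⟫ = -⟪a - p, u - p⟫ := by
    rw [real_inner_comm, ← inner_neg_left, neg_sub]
  linarith [hsub u]

theorem mul_norm_add_inner_le {lam : ℝ} {v p : E} (hv : ‖v‖ ≤ lam) (hvp : ⟪v, p⟫ = lam * ‖p‖)
    (u : E) : lam * ‖p‖ + ⟪v, u - p⟫ ≤ lam * ‖u‖ := by
  have hvu : ⟪v, u⟫ ≤ lam * ‖u‖ :=
    (real_inner_le_norm v u).trans (mul_le_mul_of_nonneg_right hv (norm_nonneg u))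
  rw [inner_sub_right, hvp]
  linarith

-- At `a = 0` the junk value `lam / 0 = 0` is harmless: the result is a multiple of `a`.
noncomputable def softThreshold (lam : ℝ) (a : E) : E := max (1 - lam / ‖a‖) 0 • a

theorem norm_sub_softThreshold_le {lam : ℝ} (hlam : 0 ≤ lam) (a : E) :
    ‖a - softThreshold lam a‖ ≤ lam := by
  rcases eq_or_ne a 0 with rfl | ha
  · simpa [softThreshold] using hlam
  have hna : 0 < ‖a‖ := norm_pos_iff.mpr ha
  have hres : a - softThreshold lam a = min (lam / ‖a‖) 1 • a := by
    have hcoef : 1 - max (1 - lam / ‖a‖) 0 = min (lam / ‖a‖) 1 := by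
      rw [← min_sub_sub_left]; simp
    rw [← hcoef, sub_smul, one_smul, softThreshold]
  rw [hres, norm_smul, Real.norm_of_nonneg (le_min (by positivity) zero_le_one)]
  calc min (lam / ‖a‖) 1 * ‖a‖ ≤ lam / ‖a‖ * ‖a‖ := by gcongr; exact min_le_left _ _
    _ = lam := div_mul_cancel₀ lam hna.ne'

theorem inner_sub_softThreshold (lam : ℝ) (a : E) :
    ⟪a - softThreshold lam a, softThreshold lam a⟫ = lam * ‖softThreshold lam a‖ := by
  rcases eq_or_ne a 0 with rfl | ha
  · simp [softThreshold]
  set c := max (1 - lam / ‖a‖) 0 with hc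
  have hc0 : 0 ≤ c := le_max_right _ _
  have hlhs : ⟪a - c • a, c • a⟫ = (1 - c) * c * ‖a‖ ^ 2 := by
    nth_rewrite 1 [← one_smul ℝ a]
    rw [← sub_smul, real_inner_smul_left, real_inner_smul_right, real_inner_self_eq_norm_sq]
    ring
  simp only [softThreshold, ← hc]
  rw [hlhs, norm_smul, Real.norm_of_nonneg hc0]
  rcases max_choice (1 - lam / ‖a‖) 0 with h | h <;> rw [← hc] at h <;> rw [h]
  · field_simp
    ring
  · ring

end

open Classical
theorem prox_l2_norm_general {E : Type*} [NormedAddCommGroup E] [InnerProductSpace ℝ E]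
    (lam : ℝ) (hlam : 0 < lam) (a : E) :
    let f : E → ℝ := fun u => lam * ‖u‖ + (1 / 2) * ‖u - a‖ ^ 2
    let p : E := if a = 0 then 0 else max (1 - lam / ‖a‖) 0 • a
    (∀ u, f p ≤ f u) ∧ (∀ u, (∀ w, f u ≤ f w) → u = p) := by
  intro f p
  have hp : p = softThreshold lam a := by
    by_cases ha : a = 0 <;> simp [p, ha, softThreshold]
  have hgrowth : ∀ u, f p + 1 / 2 * ‖u - p‖ ^ 2 ≤ f u := fun u => by
    have := add_half_norm_sub_sq_le_of_subgradient (g := fun u => lam * ‖u‖) (a := a)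
      (mul_norm_add_inner_le (norm_sub_softThreshold_le hlam.le a)
        (inner_sub_softThreshold lam a)) u
    rw [← hp] at this
    simp only [f]
    linarith
  refine ⟨fun u => (le_add_of_nonneg_right (by positivity)).trans (hgrowth u), fun u hu => ?_⟩
  have hsq : ‖u - p‖ ^ 2 ≤ 0 := by linarith [hgrowth u, hu p]
  exact norm_sub_eq_zero_iff.mp ((sq_nonpos_iff _).mp hsq)

/-- Let `E` be a real inner product space that is a complete normed space, `λ > 0` and `a ∈ E`.
The function `u ↦ λ‖u‖ + (1/2)‖u − a‖²` has a unique minimizer over `E`, equal to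
`max (1 − λ/‖a‖) 0 • a` when `a ≠ 0`, and `0` when `a = 0`. -/
theorem prox_l2_norm {E : Type*} [NormedAddCommGroup E] [InnerProductSpace ℝ E]
    [CompleteSpace E] (lam : ℝ) (hlam : 0 < lam) (a : E) :
    let f : E → ℝ := fun u => lam * ‖u‖ + (1 / 2) * ‖u - a‖ ^ 2
    let p : E := if a = 0 then 0 else max (1 - lam / ‖a‖) 0 • a
    (∀ u, f p ≤ f u) ∧ (∀ u, (∀ w, f u ≤ f w) → u = p) :=
  prox_l2_norm_general lam hlam a
end

section
/- Let c > 0 and x_t ∈ ℝ with x_t ≠ 0, and define G_c(x | x_t) = (H'_c(x_t)/(2 x_t))·(x² − x_t²) + H_c(x_t). Then G_c(x | x_t) ≥ H_c(x) for every x ∈ ℝ, and G_c(x_t | x_t) = H_c(x_t). That is, G_c(· | x_t) is a quadratic majorizer of the Huber function touching it at x_t. -/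
/-- The derivative of the Huber function with threshold `c`. -/
noncomputable def huberDeriv (c x : ℝ) : ℝ :=
  if |x| ≤ c then x else c * Real.sign x

/-- For `c > 0` and `x_t ≠ 0`, the quadratic function
`G_c(x | x_t) = (H'_c(x_t)/(2 x_t))·(x² − x_t²) + H_c(x_t)` majorizes the Huber function and
touches it at `x_t`. -/
theorem huber_quadratic_majorizer (c xt : ℝ) (hc : 0 < c) (hxt : xt ≠ 0) :
    let G : ℝ → ℝ := fun x => (huberDeriv c xt / (2 * xt)) * (x ^ 2 - xt ^ 2) + huber c xt
    (∀ x, huber c x ≤ G x) ∧ G xt = huber c xt := by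
  intro G
  constructor
  · intro x
    show huber c x ≤ (huberDeriv c xt / (2 * xt)) * (x ^ 2 - xt ^ 2) + huber c xt
    unfold huber huberDeriv
    rcases le_or_gt (|xt|) c with h1 | h1
    · rw [if_pos h1, if_pos h1]
      have hh : xt / (2 * xt) = 1/2 := by field_simp
      rw [hh]
      rcases le_or_gt (|x|) c with h2 | h2
      · rw [if_pos h2]; ring_nf; nlinarith [sq_nonneg xt]
      · rw [if_neg (not_le.mpr h2)]
        nlinarith [sq_abs x, sq_nonneg (|x| - c)]
    · rw [if_neg (not_le.mpr h1), if_neg (not_le.mpr h1)]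
      have habs : 0 < |xt| := abs_pos.mpr hxt
      have hs : c * Real.sign xt / (2 * xt) = c / (2 * |xt|) := by
        rcases hxt.lt_or_gt with h | h
        · rw [Real.sign_of_neg h, abs_of_neg h]; field_simp
        · rw [Real.sign_of_pos h, abs_of_pos h]; field_simp
      rw [hs]
      have key : c / (2 * |xt|) * (x ^ 2 - xt ^ 2) + c * (|xt| - c / 2)
          = (c * (x ^ 2 - xt ^ 2) + 2 * |xt| * (c * (|xt| - c / 2))) / (2 * |xt|) := by
        field_simp
      rw [key]
      rcases le_or_gt (|x|) c with h2 | h2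
      · rw [if_pos h2]
        rw [le_div_iff₀ (by linarith : (0:ℝ) < 2 * |xt|)]
        have hx2 : x ^ 2 ≤ c * |xt| := by nlinarith [sq_abs x, mul_nonneg (abs_nonneg x) (sub_nonneg.mpr h2), mul_nonneg hc.le (sub_nonneg.mpr (h2.trans h1.le))]
        nlinarith [sq_abs xt, mul_nonneg (by linarith : (0:ℝ) ≤ |xt| - c) (by linarith : (0:ℝ) ≤ c * |xt| - x ^ 2)]
      · rw [if_neg (not_le.mpr h2)]
        rw [le_div_iff₀ (by linarith : (0:ℝ) < 2 * |xt|)]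
        nlinarith [sq_abs x, sq_abs xt, sq_nonneg (|x| - |xt|)]
  · show (huberDeriv c xt / (2 * xt)) * (xt ^ 2 - xt ^ 2) + huber c xt = huber c xt
    ring
end

section
/- Let c > 0 and x_t ∈ ℝ with x_t ≠ 0, and define G_c(x | x_t) = (H'_c(x_t)/(2 x_t))·(x² − x_t²) + H_c(x_t). If q : ℝ → ℝ is any quadratic polynomial satisfying q(x) ≥ H_c(x) for all x ∈ ℝ and q(x_t) = H_c(x_t), then q(x) ≥ G_c(x | x_t) for all x ∈ ℝ. That is, G_c(· | x_t) is the sharpest quadratic majorizer of the Huber function at x_t. -/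
lemma huber_touch (c x : ℝ) (hc : 0 < c) (hx : x ≠ 0) :
    huber c x = huberDeriv c x * x - (huberDeriv c x) ^ 2 / 2 := by
  unfold huber huberDeriv
  by_cases h : |x| ≤ c
  · simp [h]; ring
  · simp only [h, if_false]
    rcases lt_or_gt_of_ne hx with hneg | hpos
    · rw [Real.sign_of_neg hneg, abs_of_neg hneg]; ring
    · rw [Real.sign_of_pos hpos, abs_of_pos hpos]; ring

lemma huberDeriv_abs_le (c x : ℝ) (hc : 0 < c) (hx : x ≠ 0) :
    |huberDeriv c x| ≤ c := by
  unfold huberDeriv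
  by_cases h : |x| ≤ c
  · simpa [h]
  · simp only [h, if_false]
    rcases lt_or_gt_of_ne hx with hneg | hpos
    · rw [Real.sign_of_neg hneg]; rw [abs_of_nonpos (by nlinarith)]; linarith
    · rw [Real.sign_of_pos hpos]; rw [abs_of_pos (by nlinarith)]; linarith

lemma huber_support (c s x : ℝ) (hc : 0 < c) (hs : |s| ≤ c) :
    s * x - s ^ 2 / 2 ≤ huber c x := by
  unfold huber
  have h1 : s * x ≤ |s| * |x| := by
    calc s * x ≤ |s * x| := le_abs_self _
      _ = |s| * |x| := abs_mul s x
  split_ifs with h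
  · nlinarith [sq_nonneg (x - s)]
  · push_neg at h
    nlinarith [h1, sq_abs s, sq_nonneg (c - |s|),
      mul_nonneg (sub_nonneg.2 hs) (le_of_lt (sub_pos.2 h))]

/-- For `c > 0` and `x_t ≠ 0`, the quadratic majorizer
`G_c(x | x_t) = (H'_c(x_t)/(2 x_t))·(x² − x_t²) + H_c(x_t)` is the sharpest quadratic
majorizer of the Huber function at `x_t`: any quadratic polynomial `q` with `q ≥ H_c`
everywhere and `q x_t = H_c x_t` satisfies `q ≥ G_c(· | x_t)` everywhere. -/
theorem huber_sharpest_quadratic_majorizer (c xt : ℝ) (hc : 0 < c) (hxt : xt ≠ 0)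
    (q : ℝ → ℝ) (hquad : ∃ α β γ : ℝ, ∀ x, q x = α * x ^ 2 + β * x + γ)
    (hmaj : ∀ x, huber c x ≤ q x) (htouch : q xt = huber c xt) :
    ∀ x : ℝ, (huberDeriv c xt / (2 * xt)) * (x ^ 2 - xt ^ 2) + huber c xt ≤ q x := by
  obtain ⟨α, β, γ, hq⟩ := hquad
  set s := huberDeriv c xt with hs
  have hsc : |s| ≤ c := huberDeriv_abs_le c xt hc hxt
  have hT : huber c xt = s * xt - s ^ 2 / 2 := huber_touch c xt hc hxt
  have hsupp : ∀ x, s * x - s ^ 2 / 2 ≤ q x := fun x =>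
    le_trans (huber_support c s x hc hsc) (hmaj x)
  -- touch equation
  have hγ : α * xt ^ 2 + β * xt + γ = s * xt - s ^ 2 / 2 := by
    rw [← hq xt, htouch, hT]
  -- p(t) = q(xt+t) - support line ≥ 0, vanishes at t = 0
  have hp : ∀ t : ℝ, 0 ≤ α * t ^ 2 + (2 * α * xt + β - s) * t := by
    intro t
    have h1 := hsupp (xt + t)
    rw [hq (xt + t)] at h1
    nlinarith [h1]
  have hα : 0 ≤ α := by
    have h1 := hp 1
    have h2 := hp (-1)
    nlinarith
  set D := 2 * α * xt + β - s with hD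
  have hD0 : D = 0 := by
    rcases eq_or_lt_of_le hα with h0 | h0
    · have h1 := hp 1
      have h2 := hp (-1)
      nlinarith
    · have h1 := hp (-(D / (2 * α)))
      have hα' : α ≠ 0 := ne_of_gt h0
      have hkey : α * (-(D / (2 * α))) ^ 2 + D * (-(D / (2 * α))) = -(D ^ 2) / (4 * α) := by
        field_simp; ring
      rw [hkey] at h1
      have h2 : -(D ^ 2) / (4 * α) * (4 * α) = -(D ^ 2) := by field_simp
      have h3 : 0 ≤ -(D ^ 2) := by
        have := mul_nonneg h1 (by linarith : (0:ℝ) ≤ 4 * α)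
        linarith [h2 ▸ this]
      nlinarith [sq_nonneg D]
  -- β in terms of α
  have hβ : β = s - 2 * α * xt := by linarith [hD0]
  -- evaluate at -xt to get α ≥ s/(2 xt)
  have hneg : huber c (-xt) = huber c xt := by simp [huber, abs_neg, neg_sq]
  have hmn := hmaj (-xt)
  rw [hneg, hq (-xt), hT] at hmn
  have hγ' : γ = α * xt ^ 2 - s ^ 2 / 2 := by linear_combination hγ - xt * hβ
  rw [hβ, hγ'] at hmn
  have hxt2 : (0:ℝ) < xt ^ 2 := by positivity
  have hα2 : s / (2 * xt) ≤ α := by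
    have heq : s / (2 * xt) = (s * xt) / (2 * xt ^ 2) := by
      field_simp
    rw [heq, div_le_iff₀ (by positivity)]
    nlinarith [hmn]
  intro x
  have hfact : q x - ((s / (2 * xt)) * (x ^ 2 - xt ^ 2) + huber c xt)
      = (α - s / (2 * xt)) * (x - xt) ^ 2 := by
    rw [hq x, hT, hβ, hγ']
    field_simp
    ring
  nlinarith [mul_nonneg (sub_nonneg.2 hα2) (sq_nonneg (x - xt)), hfact]
end
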